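/- Let P be a program over 𝒰 that is B-relativized A-simplifiable, let P′ = P_{|𝒰 ∖ (A ∩ B)}, and let Q be a program over 𝒰 ∖ A such that SE^{Ā, B ∖ A}(Q) = {⟨X,Y⟩ : Y ⊆ 𝒰 ∖ A and X ∈ ⋂𝓡^Y_{⟨P′, A ∖ B, B ∖ A⟩}}. Then Q is a B-relativized A-simplification of P. -/
import Mathlib


/-- An extended rule over a type of atoms: head, positive body, negative body,
double-negated body. -/
structure ASPRule (Atom : Type) where
  head : Finset Atom
  pos : Finset Atom
  neg : Finset Atom
  nneg : Finset Atom
deriving DecidableEq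

/-- A program is a finite set of rules. -/
abbrev ASPProgram (Atom : Type) [DecidableEq Atom] := Finset (ASPRule Atom)

section Defs

variable {Atom : Type} [DecidableEq Atom] [Fintype Atom]

/-- A rule is over `S` if all its atoms lie in `S`. -/
def ruleOver (r : ASPRule Atom) (S : Finset Atom) : Prop :=
  r.head ⊆ S ∧ r.pos ⊆ S ∧ r.neg ⊆ S ∧ r.nneg ⊆ S

/-- A program is over `S` if all its rules are over `S`. -/
def progOver (P : ASPProgram Atom) (S : Finset Atom) : Prop :=
  ∀ r ∈ P, ruleOver r S

/-- `I` satisfies (is a model of) rule `r`. -/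
def satRule (I : Finset Atom) (r : ASPRule Atom) : Prop :=
  ((r.head ∪ r.neg) ∩ I).Nonempty ∨ ¬ (r.pos ∪ r.nneg ⊆ I)

/-- `I` is a model of program `P`. -/
def sat (I : Finset Atom) (P : ASPProgram Atom) : Prop :=
  ∀ r ∈ P, satRule I r

/-- The GL-reduct `P^I`. -/
def reduct (P : ASPProgram Atom) (I : Finset Atom) : ASPProgram Atom :=
  (P.filter (fun r => r.neg ∩ I = ∅ ∧ r.nneg ⊆ I)).image
    (fun r => ⟨r.head, r.pos, ∅, ∅⟩)

/-- The answer sets of `P`: minimal models of the reduct. -/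
def AS (P : ASPProgram Atom) : Set (Finset Atom) :=
  {I | sat I (reduct P I) ∧ ∀ J ⊂ I, ¬ sat J (reduct P I)}

/-- Projection of a program onto `𝒰 ∖ A`: rules with a head or negative-body atom
from `A` are dropped; in the remaining rules the atoms of `A` are removed from the
positive and double-negated bodies. -/
def projAway (P : ASPProgram Atom) (A : Finset Atom) : ASPProgram Atom :=
  (P.filter (fun r => r.neg ∩ A = ∅ ∧ r.head ∩ A = ∅)).image
    (fun r => ⟨r.head, r.pos \ A, r.neg, r.nneg \ A⟩)

/-- `R` is `A`-separated: a union of a program over `𝒰 ∖ A` and a program over `A`. -/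
def ASeparated (R : ASPProgram Atom) (A : Finset Atom) : Prop :=
  ∃ R₁ R₂ : ASPProgram Atom, R = R₁ ∪ R₂ ∧ progOver R₁ Aᶜ ∧ progOver R₂ A

/-- The defining equation of a (strong) `A`-simplification of `P` relative to `B`:
`AS(P ∪ R)_{|Ā} = AS(Q ∪ R_{|Ā})` for every `A`-separated program `R` over `B`. -/
def SimpEq (P : ASPProgram Atom) (A B : Finset Atom) (Q : ASPProgram Atom) : Prop :=
  ∀ R : ASPProgram Atom, progOver R B → ASeparated R A →
    (fun I => I \ A) '' AS (P ∪ R) = AS (Q ∪ projAway R A)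

/-- The SE-models of `P`. -/
def SE (P : ASPProgram Atom) : Set (Finset Atom × Finset Atom) :=
  {p | p.1 ⊆ p.2 ∧ sat p.2 P ∧ sat p.1 (reduct P p.2)}

/-- The (relativized) `B`-SE-models of `P`. -/
def SEB (B : Finset Atom) (P : ASPProgram Atom) : Set (Finset Atom × Finset Atom) :=
  {p | (p.1 = p.2 ∨ p.1 ⊂ p.2 ∩ B) ∧ sat p.2 P ∧
    (∀ Y' ⊂ p.2, Y' ∩ B = p.2 ∩ B → ¬ sat Y' (reduct P p.2)) ∧
    (p.1 ⊂ p.2 → ∃ X' ⊆ p.2, X' ∩ B = p.1 ∧ sat X' (reduct P p.2))}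

/-- `SE^{A₁,A₂}(P)`: the `A₂`-SE-models `⟨X,Y⟩` of `P` with `Y ⊆ A₁`. -/
def SERel (P : ASPProgram Atom) (A₁ A₂ : Finset Atom) : Set (Finset Atom × Finset Atom) :=
  {p | p ∈ SEB A₂ P ∧ p.2 ⊆ A₁}

/-- `P` satisfies `Δʳ` for `A`, `B`. -/
def DeltaR (P : ASPProgram Atom) (A B : Finset Atom) : Prop :=
  (∀ Y : Finset Atom, (Y, Y) ∈ SEB B P → A ∩ B ⊆ Y) ∧
  (∀ X Y : Finset Atom, (X, Y) ∈ SE P → (Y, Y) ∈ SEB B P → X \ A = Y \ A → X = Y) ∧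
  (∀ X Y : Finset Atom, (X, Y) ∈ SEB B P → (X ∪ (Y ∩ A ∩ B), Y) ∈ SEB B P)

/-- The family `𝓡^Y_{⟨P,A,B⟩}`. -/
def RFam (P : ASPProgram Atom) (A B Y : Finset Atom) : Set (Set (Finset Atom)) :=
  {S | ∃ A' ⊆ A, (Y ∪ A', Y ∪ A') ∈ SEB B P ∧
    S = {Z | ∃ X : Finset Atom, (X, Y ∪ A') ∈ SEB B P ∧ Z = X \ A}}

/-- `P` satisfies criterion `Ω_{A,B}`: for some `Y ⊆ 𝒰 ∖ A` the family
`𝓡^Y_{⟨P,A,B⟩}` is non-empty and has no `⊆`-least element. -/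
def OmegaCrit (P : ASPProgram Atom) (A B : Finset Atom) : Prop :=
  ∃ Y : Finset Atom, Y ⊆ Aᶜ ∧ (RFam P A B Y).Nonempty ∧
    ¬ ∃ S ∈ RFam P A B Y, ∀ T ∈ RFam P A B Y, S ⊆ T

/-- `⋂ 𝓡^Y_{⟨P,A,B⟩}`, taken to be `∅` when the family is empty. -/
def RInter (P : ASPProgram Atom) (A B Y : Finset Atom) : Set (Finset Atom) :=
  {X | (RFam P A B Y).Nonempty ∧ ∀ S ∈ RFam P A B Y, X ∈ S}

/-- The `A`-`B`-SE-models `SE^B_A(P)` of `P`. -/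
def SEBA (P : ASPProgram Atom) (A B : Finset Atom) : Set (Finset Atom × Finset Atom) :=
  {p | ∃ Y : Finset Atom, (Y, Y) ∈ SEB B P ∧ p = (Y \ A, Y \ A)} ∪
  {p | ∃ X Y : Finset Atom, (X, Y) ∈ SEB B P ∧ X ⊂ Y ∧
    (∀ Y' : Finset Atom, (Y', Y') ∈ SEB B P → Y' \ A = Y \ A →
      ∃ X' : Finset Atom, (X', Y') ∈ SEB B P ∧ X' \ A = X \ A) ∧
    p = (X \ A, Y \ A)}

end Defs
section Aux
set_option linter.unusedSectionVars false

variable {Atom : Type} [DecidableEq Atom] [Fintype Atom]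

/-- Auxiliary: satisfaction characterised pointwise. -/
lemma aux_satRule_iff (I : Finset Atom) (r : ASPRule Atom) :
    satRule I r ↔ ((∃ x ∈ r.head, x ∈ I) ∨ (∃ x ∈ r.neg, x ∈ I) ∨
      ¬ (r.pos ⊆ I ∧ r.nneg ⊆ I)) := by
  unfold satRule
  rw [Finset.union_subset_iff]
  constructor
  · rintro (⟨x, hx⟩ | h)
    · simp only [Finset.mem_inter, Finset.mem_union] at hx
      rcases hx with ⟨h1 | h1, h2⟩
      · exact Or.inl ⟨x, h1, h2⟩
      · exact Or.inr (Or.inl ⟨x, h1, h2⟩)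
    · exact Or.inr (Or.inr h)
  · rintro (⟨x, h1, h2⟩ | ⟨x, h1, h2⟩ | h)
    · exact Or.inl ⟨x, by simp [h1, h2]⟩
    · exact Or.inl ⟨x, by simp [h1, h2]⟩
    · exact Or.inr h

lemma aux_sat_union {I : Finset Atom} {P R : ASPProgram Atom} :
    sat I (P ∪ R) ↔ sat I P ∧ sat I R := by
  unfold sat
  constructor
  · intro h
    exact ⟨fun r hr => h r (Finset.mem_union_left _ hr),
           fun r hr => h r (Finset.mem_union_right _ hr)⟩
  · rintro ⟨h1, h2⟩ r hr
    rcases Finset.mem_union.mp hr with h | h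
    exacts [h1 r h, h2 r h]

/-- Satisfaction of a reduct, characterised rule-wise. -/
lemma aux_sat_reduct_iff (J I : Finset Atom) (P : ASPProgram Atom) :
    sat J (reduct P I) ↔ ∀ r ∈ P, r.neg ∩ I = ∅ → r.nneg ⊆ I →
      ((∃ x ∈ r.head, x ∈ J) ∨ ¬ r.pos ⊆ J) := by
  unfold sat reduct
  constructor
  · intro h r hr h1 h2
    have := h ⟨r.head, r.pos, ∅, ∅⟩ (Finset.mem_image.mpr
      ⟨r, Finset.mem_filter.mpr ⟨hr, h1, h2⟩, rfl⟩)
    rw [aux_satRule_iff] at this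
    simpa using this
  · intro h r' hr'
    rcases Finset.mem_image.mp hr' with ⟨r, hr, rfl⟩
    rcases Finset.mem_filter.mp hr with ⟨hrP, h1, h2⟩
    rw [aux_satRule_iff]
    simpa using h r hrP h1 h2

lemma aux_sat_reduct_union {J I : Finset Atom} {P R : ASPProgram Atom} :
    sat J (reduct (P ∪ R) I) ↔ sat J (reduct P I) ∧ sat J (reduct R I) := by
  simp only [aux_sat_reduct_iff]
  constructor
  · intro h
    exact ⟨fun r hr => h r (Finset.mem_union_left _ hr),
           fun r hr => h r (Finset.mem_union_right _ hr)⟩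
  · rintro ⟨h1, h2⟩ r hr
    rcases Finset.mem_union.mp hr with h | h
    exacts [h1 r h, h2 r h]

/-- `I ⊨ P^I` iff `I ⊨ P`. -/
lemma aux_sat_reduct_self (I : Finset Atom) (P : ASPProgram Atom) :
    sat I (reduct P I) ↔ sat I P := by
  rw [aux_sat_reduct_iff]
  unfold sat
  constructor
  · intro h r hr
    rw [aux_satRule_iff]
    by_cases h1 : r.neg ∩ I = ∅
    · by_cases h2 : r.nneg ⊆ I
      · rcases h r hr h1 h2 with h3 | h3
        · exact Or.inl h3
        · exact Or.inr (Or.inr (fun hc => h3 hc.1))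
      · exact Or.inr (Or.inr (fun hc => h2 hc.2))
    · rcases Finset.nonempty_iff_ne_empty.mpr h1 with ⟨x, hx⟩
      rcases Finset.mem_inter.mp hx with ⟨hx1, hx2⟩
      exact Or.inr (Or.inl ⟨x, hx1, hx2⟩)
  · intro h r hr h1 h2
    have := h r hr
    rw [aux_satRule_iff] at this
    rcases this with h3 | h3 | h3
    · exact Or.inl h3
    · rcases h3 with ⟨x, hx1, hx2⟩
      exact absurd (Finset.eq_empty_iff_forall_notMem.mp h1 x) (by simp [hx1, hx2])
    · exact Or.inr (fun hc => h3 ⟨hc, h2⟩)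

/-- Membership in `AS`. -/
lemma aux_mem_AS {I : Finset Atom} {P : ASPProgram Atom} :
    I ∈ AS P ↔ sat I (reduct P I) ∧ ∀ J ⊂ I, ¬ sat J (reduct P I) := Iff.rfl

/-- Reduct satisfaction only depends on atoms in `D` when the program is over `D`. -/
lemma aux_reduct_det {S : ASPProgram Atom} {D : Finset Atom} (hS : progOver S D)
    {I J J' : Finset Atom} (h : J ∩ D = J' ∩ D) :
    sat J (reduct S I) → sat J' (reduct S I) := by
  rw [aux_sat_reduct_iff, aux_sat_reduct_iff]
  intro hJ r hr h1 h2
  obtain ⟨hh, hp, -, -⟩ := hS r hr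
  have hiff : ∀ K K' : Finset Atom, K ∩ D = K' ∩ D →
      ((∃ x ∈ r.head, x ∈ K) → (∃ x ∈ r.head, x ∈ K')) := by
    intro K K' hKK ⟨x, hx1, hx2⟩
    have : x ∈ K' ∩ D := hKK ▸ Finset.mem_inter.mpr ⟨hx2, hh hx1⟩
    exact ⟨x, hx1, (Finset.mem_inter.mp this).1⟩
  have hpos : r.pos ⊆ J' → r.pos ⊆ J := by
    intro hc x hx
    have : x ∈ J' ∩ D := Finset.mem_inter.mpr ⟨hc hx, hp hx⟩
    rw [← h] at this
    exact (Finset.mem_inter.mp this).1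
  rcases hJ r hr h1 h2 with h3 | h3
  · exact Or.inl (hiff J J' h h3)
  · exact Or.inr (fun hc => h3 (hpos hc))

end Aux
section Aux2
set_option linter.unusedSectionVars false

variable {Atom : Type} [DecidableEq Atom] [Fintype Atom]

/-- Auxiliary: the program of facts over `S`. -/
def factsP (S : Finset Atom) : ASPProgram Atom :=
  S.image (fun y => ⟨{y}, ∅, ∅, ∅⟩)

/-- Auxiliary: rules `p ← q` for all `p, q ∈ D`. -/
def pairsP (D : Finset Atom) : ASPProgram Atom :=
  (D ×ˢ D).image (fun pq => ⟨{pq.1}, {pq.2}, ∅, ∅⟩)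

lemma aux_sat_factsP {I S : Finset Atom} : sat I (factsP S : ASPProgram Atom) ↔ S ⊆ I := by
  unfold sat factsP
  simp only [Finset.mem_image, forall_exists_index, and_imp]
  constructor
  · intro h x hx
    have := h _ x hx rfl
    rw [aux_satRule_iff] at this
    simpa using this
  · intro h r x hx hr
    rw [aux_satRule_iff]
    subst hr
    simp only [Finset.mem_singleton]
    exact Or.inl ⟨x, rfl, h hx⟩

lemma aux_sat_reduct_factsP {J I S : Finset Atom} :
    sat J (reduct (factsP S) I) ↔ S ⊆ J := by
  rw [aux_sat_reduct_iff]
  unfold factsP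
  simp only [Finset.mem_image, forall_exists_index, and_imp]
  constructor
  · intro h x hx
    have := h _ x hx rfl (by simp) (by simp)
    simpa using this
  · intro h r x hx hr
    subst hr
    intro _ _
    simp only [Finset.mem_singleton]
    exact Or.inl ⟨x, rfl, h hx⟩

lemma aux_sat_pairsP {I D : Finset Atom} :
    sat I (pairsP D : ASPProgram Atom) ↔ ∀ p ∈ D, ∀ q ∈ D, q ∈ I → p ∈ I := by
  unfold sat pairsP
  simp only [Finset.mem_image, Finset.mem_product, Prod.exists, forall_exists_index, and_imp]
  constructor
  · intro h p hp q hq hqI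
    have := h _ p q hp hq rfl
    rw [aux_satRule_iff] at this
    simp only [Finset.mem_singleton, Finset.singleton_subset_iff, Finset.empty_subset,
      and_true, exists_eq_left, not_and] at this
    rcases this with h1 | h1 | h1
    · exact h1
    · exact absurd h1 (by simp)
    · exact absurd hqI h1
  · intro h r p q hp hq hr
    subst hr
    rw [aux_satRule_iff]
    simp only [Finset.mem_singleton, Finset.singleton_subset_iff, Finset.empty_subset,
      and_true, exists_eq_left]
    by_cases hqI : q ∈ I
    · exact Or.inl (h p hp q hq hqI)
    · exact Or.inr (Or.inr (fun hc => hqI hc))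

lemma aux_sat_reduct_pairsP {J I D : Finset Atom} :
    sat J (reduct (pairsP D) I) ↔ ∀ p ∈ D, ∀ q ∈ D, q ∈ J → p ∈ J := by
  rw [aux_sat_reduct_iff]
  unfold pairsP
  simp only [Finset.mem_image, Finset.mem_product, Prod.exists, forall_exists_index, and_imp]
  constructor
  · intro h p hp q hq hqJ
    have := h _ p q hp hq rfl (by simp) (by simp)
    simp only [Finset.mem_singleton, Finset.singleton_subset_iff, exists_eq_left] at this
    rcases this with h1 | h1
    · exact h1
    · exact absurd hqJ h1
  · intro h r p q hp hq hr
    subst hr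
    intro _ _
    simp only [Finset.mem_singleton, Finset.singleton_subset_iff, exists_eq_left]
    by_cases hqJ : q ∈ J
    · exact Or.inl (h p hp q hq hqJ)
    · exact Or.inr hqJ

lemma aux_progOver_factsP {S D : Finset Atom} (h : S ⊆ D) :
    progOver (factsP S : ASPProgram Atom) D := by
  intro r hr
  rcases Finset.mem_image.mp hr with ⟨x, hx, rfl⟩
  exact ⟨by simpa using h hx, by simp, by simp, by simp⟩

lemma aux_progOver_pairsP {S D : Finset Atom} (h : S ⊆ D) :
    progOver (pairsP S : ASPProgram Atom) D := by
  intro r hr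
  rcases Finset.mem_image.mp hr with ⟨⟨p, q⟩, hx, rfl⟩
  rcases Finset.mem_product.mp hx with ⟨hp, hq⟩
  exact ⟨by simpa using h hp, by simpa using h hq, by simp, by simp⟩

lemma aux_progOver_union {P R : ASPProgram Atom} {D : Finset Atom}
    (h1 : progOver P D) (h2 : progOver R D) : progOver (P ∪ R) D := by
  intro r hr
  rcases Finset.mem_union.mp hr with h | h
  exacts [h1 r h, h2 r h]

lemma aux_projAway_union {P R : ASPProgram Atom} {A : Finset Atom} :
    projAway (P ∪ R) A = projAway P A ∪ projAway R A := by
  unfold projAway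
  rw [Finset.filter_union, Finset.image_union]

lemma aux_projAway_factsP {S A : Finset Atom} :
    projAway (factsP S : ASPProgram Atom) A = factsP (S \ A) := by
  unfold projAway factsP
  ext r
  simp only [Finset.mem_image, Finset.mem_filter, Finset.mem_sdiff]
  constructor
  · rintro ⟨r', ⟨⟨x, hx, rfl⟩, h1, h2⟩, rfl⟩
    refine ⟨x, ⟨hx, ?_⟩, by simp⟩
    intro hxA
    simp only [Finset.singleton_inter_of_mem hxA] at h2
    exact absurd h2 (by simp)
  · rintro ⟨x, ⟨hx, hxA⟩, rfl⟩
    exact ⟨⟨{x}, ∅, ∅, ∅⟩, ⟨⟨x, hx, rfl⟩, by simp,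
      by simp [Finset.singleton_inter_of_notMem hxA]⟩, by simp⟩

lemma aux_projAway_pairsP {D A : Finset Atom} (h : ∀ x ∈ D, x ∉ A) :
    projAway (pairsP D : ASPProgram Atom) A = pairsP D := by
  unfold projAway pairsP
  ext r
  simp only [Finset.mem_image, Finset.mem_filter, Finset.mem_product, Prod.exists]
  constructor
  · rintro ⟨r', ⟨⟨p, q, hpq, rfl⟩, h1, h2⟩, rfl⟩
    refine ⟨p, q, hpq, ?_⟩
    have : ({q} : Finset Atom) \ A = {q} := by
      rw [Finset.sdiff_eq_self_iff_disjoint]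
      simp [Finset.disjoint_singleton_left, h q hpq.2]
    simp [this]
  · rintro ⟨p, q, hpq, rfl⟩
    refine ⟨⟨{p}, {q}, ∅, ∅⟩, ⟨⟨p, q, hpq, rfl⟩, by simp,
      by simp [Finset.singleton_inter_of_notMem (h p hpq.1)]⟩, ?_⟩
    have : ({q} : Finset Atom) \ A = {q} := by
      rw [Finset.sdiff_eq_self_iff_disjoint]
      simp [Finset.disjoint_singleton_left, h q hpq.2]
    simp [this]

lemma aux_progOver_projAway {R : ASPProgram Atom} {A B : Finset Atom}
    (h : progOver R B) : progOver (projAway R A) (B \ A) := by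
  intro r hr
  unfold projAway at hr
  rcases Finset.mem_image.mp hr with ⟨r', hr', rfl⟩
  rcases Finset.mem_filter.mp hr' with ⟨hrR, h1, h2⟩
  obtain ⟨hh, hp, hn, hnn⟩ := h r' hrR
  refine ⟨?_, ?_, ?_, ?_⟩
  · intro x hx
    simp only [Finset.mem_sdiff]
    refine ⟨hh hx, fun hxA => ?_⟩
    have : x ∈ r'.head ∩ A := Finset.mem_inter.mpr ⟨hx, hxA⟩
    rw [h2] at this; simp at this
  · intro x hx
    rcases Finset.mem_sdiff.mp hx with ⟨hx1, hx2⟩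
    exact Finset.mem_sdiff.mpr ⟨hp hx1, hx2⟩
  · intro x hx
    simp only [Finset.mem_sdiff]
    refine ⟨hn hx, fun hxA => ?_⟩
    have : x ∈ r'.neg ∩ A := Finset.mem_inter.mpr ⟨hx, hxA⟩
    rw [h1] at this; simp at this
  · intro x hx
    rcases Finset.mem_sdiff.mp hx with ⟨hx1, hx2⟩
    exact Finset.mem_sdiff.mpr ⟨hnn hx1, hx2⟩

end Aux2
section Aux3
set_option linter.unusedSectionVars false

variable {Atom : Type} [DecidableEq Atom] [Fintype Atom]

lemma aux_sat_projAway_iff {J C : Finset Atom} {P : ASPProgram Atom} :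
    sat J (projAway P C) ↔ ∀ r ∈ P, r.neg ∩ C = ∅ → r.head ∩ C = ∅ →
      (((r.head ∪ r.neg) ∩ J).Nonempty ∨ ¬ ((r.pos \ C) ∪ (r.nneg \ C) ⊆ J)) := by
  unfold sat projAway
  constructor
  · intro h r hr h1 h2
    exact h _ (Finset.mem_image.mpr ⟨r, Finset.mem_filter.mpr ⟨hr, h1, h2⟩, rfl⟩)
  · intro h r' hr'
    rcases Finset.mem_image.mp hr' with ⟨r, hr, rfl⟩
    rcases Finset.mem_filter.mp hr with ⟨hrP, h1, h2⟩
    exact h r hrP h1 h2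

lemma aux_sat_reduct_projAway_iff {J I C : Finset Atom} {P : ASPProgram Atom} :
    sat J (reduct (projAway P C) I) ↔ ∀ r ∈ P, r.neg ∩ C = ∅ → r.head ∩ C = ∅ →
      r.neg ∩ I = ∅ → r.nneg \ C ⊆ I → ((∃ x ∈ r.head, x ∈ J) ∨ ¬ r.pos \ C ⊆ J) := by
  rw [aux_sat_reduct_iff]
  unfold projAway
  constructor
  · intro h r hr h1 h2 h3 h4
    exact h _ (Finset.mem_image.mpr ⟨r, Finset.mem_filter.mpr ⟨hr, h1, h2⟩, rfl⟩) h3 h4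
  · intro h r' hr'
    rcases Finset.mem_image.mp hr' with ⟨r, hr, rfl⟩
    rcases Finset.mem_filter.mp hr with ⟨hrP, h1, h2⟩
    exact h r hrP h1 h2

/-- subset of a set with `C` added / removed, for sets avoiding C -/
lemma aux_sdiff_subset_iff {s C Y : Finset Atom} (hCY : C ⊆ Y) :
    s ⊆ Y ↔ s \ C ⊆ Y := by
  constructor
  · intro h x hx
    exact h (Finset.mem_sdiff.mp hx).1
  · intro h x hx
    by_cases hxC : x ∈ C
    · exact hCY hxC
    · exact h (Finset.mem_sdiff.mpr ⟨hx, hxC⟩)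

/-- S2: for `C ⊆ Y`, `Y ⊨ P ↔ Y ⊨ P_{|C̄}`. -/
lemma aux_S2 {Y C : Finset Atom} {P : ASPProgram Atom} (hCY : C ⊆ Y) :
    sat Y P ↔ sat Y (projAway P C) := by
  rw [aux_sat_projAway_iff]
  unfold sat satRule
  constructor
  · intro h r hr _ _
    rcases h r hr with h3 | h3
    · exact Or.inl h3
    · refine Or.inr (fun hc => h3 ?_)
      rw [Finset.union_subset_iff] at hc ⊢
      exact ⟨(aux_sdiff_subset_iff hCY).mpr hc.1, (aux_sdiff_subset_iff hCY).mpr hc.2⟩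
  · intro h r hr
    by_cases h1 : r.neg ∩ C = ∅
    · by_cases h2 : r.head ∩ C = ∅
      · rcases h r hr h1 h2 with h3 | h3
        · exact Or.inl h3
        · refine Or.inr (fun hc => h3 ?_)
          rw [Finset.union_subset_iff] at hc ⊢
          exact ⟨(aux_sdiff_subset_iff hCY).mp hc.1, (aux_sdiff_subset_iff hCY).mp hc.2⟩
      · rcases Finset.nonempty_iff_ne_empty.mpr h2 with ⟨x, hx⟩
        rcases Finset.mem_inter.mp hx with ⟨hx1, hx2⟩
        exact Or.inl ⟨x, Finset.mem_inter.mpr ⟨Finset.mem_union_left _ hx1, hCY hx2⟩⟩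
    · rcases Finset.nonempty_iff_ne_empty.mpr h1 with ⟨x, hx⟩
      rcases Finset.mem_inter.mp hx with ⟨hx1, hx2⟩
      exact Or.inl ⟨x, Finset.mem_inter.mpr ⟨Finset.mem_union_right _ hx1, hCY hx2⟩⟩

/-- S1: satisfaction of `P_{|C̄}` is insensitive to `C`-atoms. -/
lemma aux_S1 {J J' C : Finset Atom} {P : ASPProgram Atom}
    (h : ∀ x, x ∉ C → (x ∈ J ↔ x ∈ J')) :
    sat J (projAway P C) → sat J' (projAway P C) := by
  rw [aux_sat_projAway_iff, aux_sat_projAway_iff]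
  intro hJ r hr h1 h2
  rcases hJ r hr h1 h2 with h3 | h3
  · rcases h3 with ⟨x, hx⟩
    rcases Finset.mem_inter.mp hx with ⟨hx1, hx2⟩
    have hxC : x ∉ C := by
      intro hxC
      rcases Finset.mem_union.mp hx1 with h4 | h4
      · exact absurd (Finset.eq_empty_iff_forall_notMem.mp h2 x)
          (by simp [Finset.mem_inter.mpr ⟨h4, hxC⟩])
      · exact absurd (Finset.eq_empty_iff_forall_notMem.mp h1 x)
          (by simp [Finset.mem_inter.mpr ⟨h4, hxC⟩])
    exact Or.inl ⟨x, Finset.mem_inter.mpr ⟨hx1, (h x hxC).mp hx2⟩⟩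
  · refine Or.inr (fun hc => h3 ?_)
    intro x hx
    have hxC : x ∉ C := by
      rcases Finset.mem_union.mp hx with h4 | h4 <;>
        exact (Finset.mem_sdiff.mp h4).2
    exact (h x hxC).mpr (hc hx)

/-- S3: for `C ⊆ I`, `J ∪ C ⊨ P^I ↔ J \ C ⊨ (P_{|C̄})^I`. -/
lemma aux_S3 {J I C : Finset Atom} {P : ASPProgram Atom} (hCI : C ⊆ I) :
    sat (J ∪ C) (reduct P I) ↔ sat (J \ C) (reduct (projAway P C) I) := by
  rw [aux_sat_reduct_iff, aux_sat_reduct_projAway_iff]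
  constructor
  · intro h r hr h1 h2 h3 h4
    have h4' : r.nneg ⊆ I := (aux_sdiff_subset_iff hCI).mpr h4
    rcases h r hr h3 h4' with h5 | h5
    · rcases h5 with ⟨x, hx1, hx2⟩
      refine Or.inl ⟨x, hx1, ?_⟩
      have hxC : x ∉ C := fun hxC =>
        absurd (Finset.eq_empty_iff_forall_notMem.mp h2 x)
          (by simp [Finset.mem_inter.mpr ⟨hx1, hxC⟩])
      rcases Finset.mem_union.mp hx2 with h6 | h6
      · exact Finset.mem_sdiff.mpr ⟨h6, hxC⟩
      · exact absurd h6 hxC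
    · refine Or.inr (fun hc => h5 ?_)
      intro x hx
      by_cases hxC : x ∈ C
      · exact Finset.mem_union_right _ hxC
      · exact Finset.mem_union_left _ ((Finset.mem_sdiff.mp (hc (Finset.mem_sdiff.mpr ⟨hx, hxC⟩))).1)
  · intro h r hr h3 h4
    by_cases h1 : r.neg ∩ C = ∅
    · by_cases h2 : r.head ∩ C = ∅
      · rcases h r hr h1 h2 h3 (fun x hx => h4 (Finset.mem_sdiff.mp hx).1) with h5 | h5
        · rcases h5 with ⟨x, hx1, hx2⟩
          exact Or.inl ⟨x, hx1, Finset.mem_union_left _ (Finset.mem_sdiff.mp hx2).1⟩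
        · refine Or.inr (fun hc => h5 ?_)
          intro x hx
          rcases Finset.mem_sdiff.mp hx with ⟨hx1, hx2⟩
          rcases Finset.mem_union.mp (hc hx1) with h6 | h6
          · exact Finset.mem_sdiff.mpr ⟨h6, hx2⟩
          · exact absurd h6 hx2
      · rcases Finset.nonempty_iff_ne_empty.mpr h2 with ⟨x, hx⟩
        rcases Finset.mem_inter.mp hx with ⟨hx1, hx2⟩
        exact Or.inl ⟨x, hx1, Finset.mem_union_right _ hx2⟩
    · rcases Finset.nonempty_iff_ne_empty.mpr h1 with ⟨x, hx⟩
      rcases Finset.mem_inter.mp hx with ⟨hx1, hx2⟩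
      exact absurd (Finset.eq_empty_iff_forall_notMem.mp h3 x)
        (by simp [Finset.mem_inter.mpr ⟨hx1, hCI hx2⟩])

/-- S4: the reduct of `P_{|C̄}` is insensitive to `C`-atoms of the interpretation. -/
lemma aux_S4 {J I I' C : Finset Atom} {P : ASPProgram Atom}
    (h : ∀ x, x ∉ C → (x ∈ I ↔ x ∈ I')) :
    sat J (reduct (projAway P C) I) → sat J (reduct (projAway P C) I') := by
  rw [aux_sat_reduct_projAway_iff, aux_sat_reduct_projAway_iff]
  intro hJ r hr h1 h2 h3 h4
  have h3' : r.neg ∩ I = ∅ := by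
    rw [Finset.eq_empty_iff_forall_notMem]
    intro x hx
    rcases Finset.mem_inter.mp hx with ⟨hx1, hx2⟩
    have hxC : x ∉ C := fun hxC =>
      absurd (Finset.eq_empty_iff_forall_notMem.mp h1 x)
        (by simp [Finset.mem_inter.mpr ⟨hx1, hxC⟩])
    exact absurd (Finset.eq_empty_iff_forall_notMem.mp h3 x)
      (by simp [Finset.mem_inter.mpr ⟨hx1, (h x hxC).mp hx2⟩])
  have h4' : r.nneg \ C ⊆ I := by
    intro x hx
    rcases Finset.mem_sdiff.mp hx with ⟨hx1, hx2⟩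
    exact (h x hx2).mpr (h4 hx)
  exact hJ r hr h1 h2 h3' h4'

end Aux3
section Aux4
set_option linter.unusedSectionVars false

variable {Atom : Type} [DecidableEq Atom] [Fintype Atom]

lemma aux_mem_SEB {b : Finset Atom} {S : ASPProgram Atom} {X Y : Finset Atom} :
    (X, Y) ∈ SEB b S ↔ (X = Y ∨ X ⊂ Y ∩ b) ∧ sat Y S ∧
      (∀ Y' ⊂ Y, Y' ∩ b = Y ∩ b → ¬ sat Y' (reduct S Y)) ∧
      (X ⊂ Y → ∃ X' ⊆ Y, X' ∩ b = X ∧ sat X' (reduct S Y)) := Iff.rfl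

lemma aux_SEB_diag {b : Finset Atom} {S : ASPProgram Atom} {Y : Finset Atom} :
    (Y, Y) ∈ SEB b S ↔ sat Y S ∧
      (∀ Y' ⊂ Y, Y' ∩ b = Y ∩ b → ¬ sat Y' (reduct S Y)) := by
  rw [aux_mem_SEB]
  constructor
  · rintro ⟨-, h2, h3, -⟩; exact ⟨h2, h3⟩
  · rintro ⟨h2, h3⟩
    exact ⟨Or.inl rfl, h2, h3, fun h => absurd h (lt_irrefl Y)⟩

lemma aux_SEB_fst {b : Finset Atom} {S : ASPProgram Atom} {X Y : Finset Atom}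
    (h : (X, Y) ∈ SEB b S) : (Y, Y) ∈ SEB b S := by
  rw [aux_mem_SEB] at h
  exact aux_SEB_diag.mpr ⟨h.2.1, h.2.2.1⟩

/-- Probe with facts: `Y ∈ AS(S ∪ facts(Y ∩ b))` iff `(Y,Y)` is a `b`-SE-model. -/
lemma aux_probeD {b : Finset Atom} {S : ASPProgram Atom} {Y : Finset Atom} :
    Y ∈ AS (S ∪ factsP (Y ∩ b)) ↔ (Y, Y) ∈ SEB b S := by
  rw [aux_mem_AS, aux_SEB_diag]
  constructor
  · rintro ⟨hsat, hmin⟩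
    rw [aux_sat_reduct_union] at hsat
    refine ⟨(aux_sat_reduct_self _ _).mp hsat.1, ?_⟩
    intro Y' h1 h2 h3
    refine hmin Y' h1 (aux_sat_reduct_union.mpr ⟨h3, aux_sat_reduct_factsP.mpr ?_⟩)
    rw [← h2]
    exact Finset.inter_subset_left
  · rintro ⟨hsat, hii⟩
    constructor
    · exact aux_sat_reduct_union.mpr ⟨(aux_sat_reduct_self _ _).mpr hsat,
        aux_sat_reduct_factsP.mpr Finset.inter_subset_left⟩
    · intro J hJ hsatJ
      rw [aux_sat_reduct_union, aux_sat_reduct_factsP] at hsatJ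
      refine hii J hJ ?_ hsatJ.1
      apply Finset.Subset.antisymm
      · exact Finset.inter_subset_inter_right hJ.subset
      · intro x hx
        exact Finset.mem_inter.mpr ⟨hsatJ.2 hx, (Finset.mem_inter.mp hx).2⟩

/-- Probe with facts and pair rules: detects absence of a non-total `b`-SE-model. -/
lemma aux_probeG {b : Finset Atom} {S : ASPProgram Atom} {X Y : Finset Atom}
    (hX : X ⊂ Y ∩ b) :
    Y ∈ AS (S ∪ (factsP X ∪ pairsP ((Y ∩ b) \ X))) ↔
      ((Y, Y) ∈ SEB b S ∧ (X, Y) ∉ SEB b S) := by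
  have hXY : X ⊂ Y := by
    refine lt_of_le_of_ne (hX.subset.trans Finset.inter_subset_left) (fun h => ?_)
    subst h
    exact absurd (lt_of_lt_of_le hX Finset.inter_subset_left) (lt_irrefl X)
  have hXb : X ⊆ b := hX.subset.trans Finset.inter_subset_right
  rw [aux_mem_AS, aux_SEB_diag]
  constructor
  · rintro ⟨hsat, hmin⟩
    rw [aux_sat_reduct_union, aux_sat_reduct_union] at hsat
    have hdiag : sat Y S ∧ ∀ Y' ⊂ Y, Y' ∩ b = Y ∩ b → ¬ sat Y' (reduct S Y) := by
      refine ⟨(aux_sat_reduct_self _ _).mp hsat.1, ?_⟩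
      intro Y' h1 h2 h3
      refine hmin Y' h1 (aux_sat_reduct_union.mpr ⟨h3, aux_sat_reduct_union.mpr
        ⟨aux_sat_reduct_factsP.mpr ?_, aux_sat_reduct_pairsP.mpr ?_⟩⟩)
      · rw [← h2] at hX
        exact hX.subset.trans Finset.inter_subset_left
      · intro p hp q hq hqY'
        rcases Finset.mem_sdiff.mp hp with ⟨hp1, -⟩
        rw [← h2] at hp1
        exact (Finset.mem_inter.mp hp1).1
    refine ⟨hdiag, fun hmem => ?_⟩
    rw [aux_mem_SEB] at hmem
    obtain ⟨X', hX'Y, hX'b, hX'sat⟩ := hmem.2.2.2 hXY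
    have hX'ssub : X' ⊂ Y := by
      refine lt_of_le_of_ne hX'Y (fun h => ?_)
      rw [h] at hX'b
      exact hX.ne hX'b.symm
    refine hmin X' hX'ssub (aux_sat_reduct_union.mpr ⟨hX'sat, aux_sat_reduct_union.mpr
      ⟨aux_sat_reduct_factsP.mpr (hX'b ▸ Finset.inter_subset_left), aux_sat_reduct_pairsP.mpr ?_⟩⟩)
    intro p hp q hq hqX'
    have : q ∈ X' ∩ b :=
      Finset.mem_inter.mpr ⟨hqX', (Finset.mem_inter.mp (Finset.mem_sdiff.mp hq).1).2⟩
    rw [hX'b] at this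
    exact absurd this (Finset.mem_sdiff.mp hq).2
  · rintro ⟨⟨hsat, hii⟩, hnot⟩
    constructor
    · refine aux_sat_reduct_union.mpr ⟨(aux_sat_reduct_self _ _).mpr hsat,
        aux_sat_reduct_union.mpr ⟨aux_sat_reduct_factsP.mpr hXY.subset,
          aux_sat_reduct_pairsP.mpr ?_⟩⟩
      intro p hp q hq hqY
      exact (Finset.mem_inter.mp (Finset.mem_sdiff.mp hp).1).1
    · intro J hJ hsatJ
      rw [aux_sat_reduct_union, aux_sat_reduct_union, aux_sat_reduct_factsP,
        aux_sat_reduct_pairsP] at hsatJ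
      obtain ⟨hJS, hfX, hprs⟩ := hsatJ
      by_cases hD : ∃ q ∈ (Y ∩ b) \ X, q ∈ J
      · obtain ⟨q, hq, hqJ⟩ := hD
        have hDJ : ∀ p ∈ (Y ∩ b) \ X, p ∈ J := fun p hp => hprs p hp q hq hqJ
        have heq : J ∩ b = Y ∩ b := by
          apply Finset.Subset.antisymm
          · exact Finset.inter_subset_inter_right hJ.subset
          · intro x hx
            by_cases hxX : x ∈ X
            · exact Finset.mem_inter.mpr ⟨hfX hxX, (Finset.mem_inter.mp hx).2⟩
            · exact Finset.mem_inter.mpr ⟨hDJ x (Finset.mem_sdiff.mpr ⟨hx, hxX⟩),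
                (Finset.mem_inter.mp hx).2⟩
        exact hii J hJ heq hJS
      · push_neg at hD
        have heq : J ∩ b = X := by
          apply Finset.Subset.antisymm
          · intro x hx
            rcases Finset.mem_inter.mp hx with ⟨hx1, hx2⟩
            have hxYb : x ∈ Y ∩ b := Finset.mem_inter.mpr ⟨hJ.subset hx1, hx2⟩
            by_contra hxX
            exact hD x (Finset.mem_sdiff.mpr ⟨hxYb, hxX⟩) hx1
          · intro x hx
            exact Finset.mem_inter.mpr ⟨hfX hx, hXb hx⟩
        exact hnot (aux_mem_SEB.mpr ⟨Or.inr hX, hsat, hii,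
          fun _ => ⟨J, hJ.subset, heq, hJS⟩⟩)

/-- Answer sets of programs over `Aᶜ` avoid `A`. -/
lemma aux_AS_subset {A : Finset Atom} {P : ASPProgram Atom} {I : Finset Atom}
    (hP : progOver P Aᶜ) (hI : I ∈ AS P) : I ⊆ Aᶜ := by
  by_cases h : I \ A = I
  · intro x hx
    rw [← h] at hx
    simpa using (Finset.mem_sdiff.mp hx).2
  · exfalso
    have hss : I \ A ⊂ I := lt_of_le_of_ne (Finset.sdiff_subset) h
    refine hI.2 (I \ A) hss (aux_reduct_det hP ?_ hI.1)
    ext x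
    simp only [Finset.mem_inter, Finset.mem_sdiff, Finset.mem_compl]
    tauto

lemma aux_sdiff_subset_compl {A B : Finset Atom} : (B \ A : Finset Atom) ⊆ Aᶜ := by
  intro x hx
  simp only [Finset.mem_compl]
  exact (Finset.mem_sdiff.mp hx).2

lemma aux_progOver_mono {P : ASPProgram Atom} {D D' : Finset Atom}
    (h : progOver P D) (hDD : D ⊆ D') : progOver P D' := by
  intro r hr
  obtain ⟨h1, h2, h3, h4⟩ := h r hr
  exact ⟨h1.trans hDD, h2.trans hDD, h3.trans hDD, h4.trans hDD⟩

/-- Transfer lemma: programs over `Aᶜ` with the same relativized SE-models have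
the same answer sets modulo any extension over `B \ A`. -/
lemma aux_transfer {A B : Finset Atom} {G H R₁ : ASPProgram Atom}
    (hG : progOver G Aᶜ) (hH : progOver H Aᶜ)
    (hsre : SERel G Aᶜ (B \ A) = SERel H Aᶜ (B \ A))
    (hR : progOver R₁ (B \ A)) : AS (G ∪ R₁) ⊆ AS (H ∪ R₁) := by
  intro I hI
  set b : Finset Atom := B \ A with hb
  have hRc : progOver R₁ Aᶜ := aux_progOver_mono hR aux_sdiff_subset_compl
  have hIc : I ⊆ Aᶜ := aux_AS_subset (aux_progOver_union hG hRc) hI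
  obtain ⟨hsatI, hminI⟩ := hI
  rw [aux_sat_reduct_union] at hsatI
  obtain ⟨hGI, hRI⟩ := hsatI
  have hIIG : (I, I) ∈ SEB b G := by
    refine aux_SEB_diag.mpr ⟨(aux_sat_reduct_self _ _).mp hGI, ?_⟩
    intro Y' h1 h2 h3
    exact hminI Y' h1 (aux_sat_reduct_union.mpr ⟨h3, aux_reduct_det hR h2.symm hRI⟩)
  have hIIH : (I, I) ∈ SEB b H := by
    have : (I, I) ∈ SERel H Aᶜ b := by
      rw [← hsre]; exact ⟨hIIG, hIc⟩
    exact this.1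
  obtain ⟨hsatIH, hiiH⟩ := aux_SEB_diag.mp hIIH
  constructor
  · exact aux_sat_reduct_union.mpr ⟨(aux_sat_reduct_self _ _).mpr hsatIH, hRI⟩
  · intro J hJ hsatJ
    rw [aux_sat_reduct_union] at hsatJ
    obtain ⟨hJH, hJR⟩ := hsatJ
    rcases eq_or_lt_of_le (Finset.inter_subset_inter hJ.subset (Finset.Subset.refl b))
      with heq | hlt
    · exact hiiH J hJ heq hJH
    · have hXI : (J ∩ b, I) ∈ SEB b H :=
        aux_mem_SEB.mpr ⟨Or.inr hlt, hsatIH, hiiH, fun _ => ⟨J, hJ.subset, rfl, hJH⟩⟩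
      have hXIG : (J ∩ b, I) ∈ SEB b G := by
        have : (J ∩ b, I) ∈ SERel G Aᶜ b := by
          rw [hsre]; exact ⟨hXI, hIc⟩
        exact this.1
      have hJbI : J ∩ b ⊂ I := by
        refine lt_of_le_of_ne ((Finset.inter_subset_left).trans hJ.subset) (fun h => ?_)
        rw [← h, Finset.inter_assoc, Finset.inter_self] at hlt
        exact lt_irrefl _ hlt
      obtain ⟨X', hX'I, hX'b, hX'G⟩ := (aux_mem_SEB.mp hXIG).2.2.2 hJbI
      have hX'ss : X' ⊂ I := by
        refine lt_of_le_of_ne hX'I (fun h => ?_)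
        rw [h] at hX'b
        exact hlt.ne' hX'b
      exact hminI X' hX'ss (aux_sat_reduct_union.mpr
        ⟨hX'G, aux_reduct_det hR (by rw [hX'b]) hJR⟩)
end Aux4
section Aux5
set_option linter.unusedSectionVars false

variable {Atom : Type} [DecidableEq Atom] [Fintype Atom]

/-- Lemma E: answer sets of `P ∪ facts(Y∩(B∖A)) ∪ facts(A∩B)` projecting to `Y`
correspond to total `(B∖A)`-SE-models of `P' = P_{|A∩B-free}` of the form `Y ∪ A'`. -/
lemma aux_lemE {A B Y : Finset Atom} {P : ASPProgram Atom} (hY : Y ⊆ Aᶜ) :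
    (∃ Z ∈ AS (P ∪ (factsP (Y ∩ (B \ A)) ∪ factsP (A ∩ B))), Z \ A = Y) ↔
    ∃ A' ⊆ A \ B, (Y ∪ A', Y ∪ A') ∈ SEB (B \ A) (projAway P (A ∩ B)) := by
  set b : Finset Atom := B \ A with hbdef
  set C : Finset Atom := A ∩ B with hCdef
  have hYx : ∀ x, x ∈ Y → x ∉ A := fun x hx => by simpa using hY hx
  constructor
  · rintro ⟨Z, hZAS, hZA⟩
    obtain ⟨hsatZ, hminZ⟩ := hZAS
    rw [aux_sat_reduct_union, aux_sat_reduct_union, aux_sat_reduct_factsP,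
      aux_sat_reduct_factsP] at hsatZ
    obtain ⟨hZP, hZYb, hZC⟩ := hsatZ
    have hZAx : ∀ x, x ∈ Y ↔ (x ∈ Z ∧ x ∉ A) := by
      intro x
      rw [← hZA]
      simp [Finset.mem_sdiff]
    have hZCx : ∀ x, x ∈ C → x ∈ Z := fun x hx => hZC hx
    refine ⟨(Z ∩ A) \ B, ?_, ?_⟩
    · intro x hx
      simp only [Finset.mem_sdiff, Finset.mem_inter] at hx ⊢
      tauto
    · set A' : Finset Atom := (Z ∩ A) \ B with hA'def
      set W : Finset Atom := Y ∪ A' with hWdef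
      have hWx : ∀ x, x ∈ W ↔ (x ∈ Z ∧ x ∉ C) := by
        intro x
        have h1 := hZAx x
        have h2 : x ∈ C ↔ x ∈ A ∧ x ∈ B := by simp [hCdef]
        simp only [hWdef, hA'def, Finset.mem_union, Finset.mem_sdiff, Finset.mem_inter]
        tauto
    -- satisfaction of P' by W
      have hsatZP : sat Z P := (aux_sat_reduct_self _ _).mp hZP
      have hsatZP' : sat Z (projAway P C) := (aux_S2 (fun x hx => hZCx x hx)).mp hsatZP
      have hsatWP' : sat W (projAway P C) := by
        refine aux_S1 (J := Z) (fun x hx => ?_) hsatZP'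
        rw [hWx x]
        tauto
      rw [aux_SEB_diag]
      refine ⟨hsatWP', ?_⟩
      intro W' hW' hW'b hW'sat
      have hW'C : ∀ x, x ∈ W' → x ∉ C := by
        intro x hx hxC
        have := hW'.subset hx
        rw [hWx x] at this
        exact this.2 hxC
      -- transport satisfaction to reduct over Z
      have hW'satZ : sat W' (reduct (projAway P C) Z) := by
        refine aux_S4 (I := W) (fun x hx => ?_) hW'sat
        rw [hWx x]
        tauto
      have hW'diff : W' \ C = W' := by
        ext x
        simp only [Finset.mem_sdiff]
        have := hW'C x
        tauto
      have hJsat : sat (W' ∪ C) (reduct P Z) := by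
        rw [aux_S3 (fun x hx => hZCx x hx), hW'diff]
        exact hW'satZ
      have hJss : W' ∪ C ⊂ Z := by
        have hsub : W' ∪ C ⊆ Z := by
          intro x hx
          rcases Finset.mem_union.mp hx with h | h
          · exact ((hWx x).mp (hW'.subset h)).1
          · exact hZCx x h
        refine lt_of_le_of_ne hsub ?_
        intro h
        refine hW'.ne ?_
        ext x
        constructor
        · intro hx
          exact hW'.subset hx
        · intro hx
          have hx1 : x ∈ Z := ((hWx x).mp hx).1
          have hx2 : x ∉ C := ((hWx x).mp hx).2
          rw [← h] at hx1
          rcases Finset.mem_union.mp hx1 with h1 | h1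
          · exact h1
          · exact absurd h1 hx2
      have hWbY : W ∩ b = Y ∩ b := by
        ext x
        simp only [Finset.mem_inter, hWdef, Finset.mem_union, hA'def, Finset.mem_sdiff,
          hbdef]
        tauto
      have hYbW' : Y ∩ b ⊆ W' ∪ C := by
        intro x hx
        refine Finset.mem_union_left _ ?_
        rw [← hWbY, ← hW'b] at hx
        exact (Finset.mem_inter.mp hx).1
      exact hminZ (W' ∪ C) hJss (aux_sat_reduct_union.mpr ⟨hJsat,
        aux_sat_reduct_union.mpr ⟨aux_sat_reduct_factsP.mpr hYbW',
          aux_sat_reduct_factsP.mpr Finset.subset_union_right⟩⟩)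
  · rintro ⟨A', hA'a, hW⟩
    have hA'x : ∀ x, x ∈ A' → x ∈ A ∧ x ∉ B := by
      intro x hx
      have := hA'a hx
      simpa [Finset.mem_sdiff] using this
    set W : Finset Atom := Y ∪ A' with hWdef
    set Z : Finset Atom := (Y ∪ A') ∪ C with hZdef
    have hWC : ∀ x, x ∈ W → x ∉ C := by
      intro x hx hxC
      rcases Finset.mem_inter.mp hxC with ⟨hxA, hxB⟩
      rcases Finset.mem_union.mp hx with h | h
      · exact hYx x h hxA
      · exact (hA'x x h).2 hxB
    have hZW : ∀ x, x ∉ C → (x ∈ W ↔ x ∈ Z) := by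
      intro x hx
      simp only [hZdef, hWdef, Finset.mem_union]
      tauto
    have hCZ : C ⊆ Z := Finset.subset_union_right
    have hWbY : W ∩ b = Y ∩ b := by
      ext x
      simp only [Finset.mem_inter, hWdef, Finset.mem_union, hbdef, Finset.mem_sdiff]
      have := hA'x x
      tauto
    obtain ⟨hsatW, hiiW⟩ := aux_SEB_diag.mp hW
    have hsatZP' : sat Z (projAway P C) := aux_S1 (fun x hx => hZW x hx) hsatW
    have hsatZP : sat Z P := (aux_S2 hCZ).mpr hsatZP'
    refine ⟨Z, ⟨?_, ?_⟩, ?_⟩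
    · refine aux_sat_reduct_union.mpr ⟨(aux_sat_reduct_self _ _).mpr hsatZP,
        aux_sat_reduct_union.mpr ⟨aux_sat_reduct_factsP.mpr ?_,
          aux_sat_reduct_factsP.mpr hCZ⟩⟩
      exact (Finset.inter_subset_left).trans
        ((Finset.subset_union_left).trans Finset.subset_union_left)
    · intro J hJss hsatJ
      rw [aux_sat_reduct_union, aux_sat_reduct_union, aux_sat_reduct_factsP,
        aux_sat_reduct_factsP] at hsatJ
      obtain ⟨hJP, hJYb, hJC⟩ := hsatJ
      set J' : Finset Atom := J \ C with hJ'def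
      have hJ'eq : J' ∪ C = J := by
        ext x
        simp only [hJ'def, Finset.mem_union, Finset.mem_sdiff]
        have := @hJC x
        tauto
      have hJ'C : J' \ C = J' := by
        ext x
        simp only [hJ'def, Finset.mem_sdiff]
        tauto
      have hJ'sat : sat J' (reduct (projAway P C) Z) := by
        rw [← hJ'C, ← aux_S3 hCZ, hJ'eq]
        exact hJP
      have hJ'satW : sat J' (reduct (projAway P C) W) :=
        aux_S4 (fun x hx => (hZW x hx).symm) hJ'sat
      have hJ'ss : J' ⊂ W := by
        have hsub : J' ⊆ W := by
          intro x hx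
          rcases Finset.mem_sdiff.mp hx with ⟨hx1, hx2⟩
          exact (hZW x hx2).mpr (hJss.subset hx1)
        refine lt_of_le_of_ne hsub ?_
        intro h
        refine hJss.ne ?_
        rw [← hJ'eq, h]
      have hJ'b : J' ∩ b = W ∩ b := by
        rw [hWbY]
        ext x
        simp only [Finset.mem_inter, hJ'def, Finset.mem_sdiff]
        constructor
        · rintro ⟨⟨hx1, hx2⟩, hx3⟩
          have : x ∈ Z := hJss.subset hx1
          rw [← hZW x hx2] at this
          have := (Finset.mem_inter.mp ((hWbY) ▸ Finset.mem_inter.mpr ⟨this, hx3⟩)).1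
          exact ⟨this, hx3⟩
        · rintro ⟨hx1, hx2⟩
          have hxJ : x ∈ J := hJYb (Finset.mem_inter.mpr ⟨hx1, hx2⟩)
          have hxC : x ∉ C := by
            intro hxC
            rcases Finset.mem_inter.mp hxC with ⟨hxA, -⟩
            exact hYx x hx1 hxA
          exact ⟨⟨hxJ, hxC⟩, hx2⟩
      exact hiiW J' hJ'ss hJ'b hJ'satW
    · ext x
      simp only [Finset.mem_sdiff, hZdef, Finset.mem_union, hCdef, Finset.mem_inter]
      have h1 := hYx x
      have h2 := hA'x x
      tauto

end Aux5
section Aux6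
set_option linter.unusedSectionVars false

variable {Atom : Type} [DecidableEq Atom] [Fintype Atom]

/-- Lemma F: answer sets of `P ∪ (facts X ∪ pairs D) ∪ facts(A∩B)` projecting to `Y`
correspond to total SE-models `Y ∪ A'` of `P'` admitting no SE-model projecting to `X`. -/
lemma aux_lemF {A B X Y : Finset Atom} {P : ASPProgram Atom} (hY : Y ⊆ Aᶜ)
    (hX : X ⊂ Y ∩ (B \ A)) :
    (∃ Z ∈ AS (P ∪ ((factsP X ∪ pairsP ((Y ∩ (B \ A)) \ X)) ∪ factsP (A ∩ B))), Z \ A = Y)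
    ↔ ∃ A' ⊆ A \ B, (Y ∪ A', Y ∪ A') ∈ SEB (B \ A) (projAway P (A ∩ B)) ∧
      ¬ ∃ X₀, (X₀, Y ∪ A') ∈ SEB (B \ A) (projAway P (A ∩ B)) ∧ X₀ \ (A \ B) = X := by
  set b : Finset Atom := B \ A with hbdef
  set C : Finset Atom := A ∩ B with hCdef
  set D : Finset Atom := (Y ∩ b) \ X with hDdef
  have hYx : ∀ x, x ∈ Y → x ∉ A := fun x hx => by simpa using hY hx
  have hbx : ∀ x, x ∈ b → x ∈ B ∧ x ∉ A := fun x hx => by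
    simpa [hbdef, Finset.mem_sdiff] using hx
  have hXx : ∀ x, x ∈ X → x ∈ Y ∧ x ∈ b := fun x hx => by
    simpa using hX.subset hx
  have hXnA : ∀ x, x ∈ X → x ∉ A := fun x hx => (hbx x (hXx x hx).2).2
  have hXa : X \ (A \ B) = X := by
    ext x
    simp only [Finset.mem_sdiff]
    have h1 := hXnA x
    tauto
  constructor
  · rintro ⟨Z, hZAS, hZA⟩
    obtain ⟨hsatZ, hminZ⟩ := hZAS
    rw [aux_sat_reduct_union, aux_sat_reduct_union, aux_sat_reduct_union,
      aux_sat_reduct_factsP, aux_sat_reduct_pairsP, aux_sat_reduct_factsP] at hsatZ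
    obtain ⟨hZP, ⟨hZX, -⟩, hZC⟩ := hsatZ
    have hZAx : ∀ x, x ∈ Y ↔ (x ∈ Z ∧ x ∉ A) := by
      intro x
      rw [← hZA]
      simp [Finset.mem_sdiff]
    have hZCx : ∀ x, x ∈ C → x ∈ Z := fun x hx => hZC hx
    have hZb : Z ∩ b = Y ∩ b := by
      ext x
      simp only [Finset.mem_inter]
      have h1 := hZAx x
      have h2 := hbx x
      tauto
    set A' : Finset Atom := (Z ∩ A) \ B with hA'def
    set W : Finset Atom := Y ∪ A' with hWdef
    have hWx : ∀ x, x ∈ W ↔ (x ∈ Z ∧ x ∉ C) := by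
      intro x
      have h1 := hZAx x
      have h2 : x ∈ C ↔ x ∈ A ∧ x ∈ B := by simp [hCdef]
      simp only [hWdef, hA'def, Finset.mem_union, Finset.mem_sdiff, Finset.mem_inter]
      tauto
    have hWbY : W ∩ b = Y ∩ b := by
      ext x
      simp only [Finset.mem_inter, hWdef, Finset.mem_union, hA'def, Finset.mem_sdiff]
      have h2 := hbx x
      tauto
    have hsatZP : sat Z P := (aux_sat_reduct_self _ _).mp hZP
    have hsatZP' : sat Z (projAway P C) := (aux_S2 (fun x hx => hZCx x hx)).mp hsatZP
    have hsatWP' : sat W (projAway P C) := by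
      refine aux_S1 (J := Z) (fun x hx => ?_) hsatZP'
      rw [hWx x]
      tauto
    have hii : ∀ W' ⊂ W, W' ∩ b = W ∩ b → ¬ sat W' (reduct (projAway P C) W) := by
      intro W' hW' hW'b hW'sat
      have hW'satZ : sat W' (reduct (projAway P C) Z) := by
        refine aux_S4 (I := W) (fun x hx => ?_) hW'sat
        rw [hWx x]
        tauto
      have hW'C : ∀ x, x ∈ W' → x ∉ C := by
        intro x hx hxC
        have := hW'.subset hx
        rw [hWx x] at this
        exact this.2 hxC
      have hW'diff : W' \ C = W' := by
        ext x
        simp only [Finset.mem_sdiff]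
        have := hW'C x
        tauto
      have hJsat : sat (W' ∪ C) (reduct P Z) := by
        rw [aux_S3 (fun x hx => hZCx x hx), hW'diff]
        exact hW'satZ
      have hJss : W' ∪ C ⊂ Z := by
        have hsub : W' ∪ C ⊆ Z := by
          intro x hx
          rcases Finset.mem_union.mp hx with h | h
          · exact ((hWx x).mp (hW'.subset h)).1
          · exact hZCx x h
        refine lt_of_le_of_ne hsub ?_
        intro h
        refine hW'.ne ?_
        ext x
        constructor
        · intro hx
          exact hW'.subset hx
        · intro hx
          have hx1 : x ∈ Z := ((hWx x).mp hx).1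
          have hx2 : x ∉ C := ((hWx x).mp hx).2
          rw [← h] at hx1
          rcases Finset.mem_union.mp hx1 with h1 | h1
          · exact h1
          · exact absurd h1 hx2
      have hWbW' : Y ∩ b ⊆ W' := by
        intro x hx
        rw [← hWbY, ← hW'b] at hx
        exact (Finset.mem_inter.mp hx).1
      refine hminZ (W' ∪ C) hJss (aux_sat_reduct_union.mpr ⟨hJsat,
        aux_sat_reduct_union.mpr ⟨aux_sat_reduct_union.mpr
          ⟨aux_sat_reduct_factsP.mpr ?_, aux_sat_reduct_pairsP.mpr ?_⟩,
          aux_sat_reduct_factsP.mpr Finset.subset_union_right⟩⟩)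
      · exact fun x hx => Finset.mem_union_left _ (hWbW' (Finset.mem_inter.mpr (hXx x hx)))
      · intro p hp q hq hqJ
        exact Finset.mem_union_left _ (hWbW' (Finset.mem_sdiff.mp hp).1)
    refine ⟨A', ?_, aux_SEB_diag.mpr ⟨hsatWP', hii⟩, ?_⟩
    · intro x hx
      simp only [hA'def, Finset.mem_sdiff, Finset.mem_inter] at hx ⊢
      tauto
    · rintro ⟨X₀, hX₀mem, hX₀a⟩
      rcases (aux_mem_SEB.mp hX₀mem).1 with hsh | hsh
      · -- X₀ = W, so X = Y: impossible
        have hXY' : X = Y := by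
          rw [← hX₀a, hsh]
          ext x
          simp only [hWdef, hA'def, Finset.mem_sdiff, Finset.mem_union, Finset.mem_inter]
          have h1 := hYx x
          tauto
        rw [hXY'] at hX
        exact absurd (lt_of_lt_of_le hX Finset.inter_subset_left) (lt_irrefl Y)
      · have hX₀X : X₀ = X := by
          rw [← hX₀a]
          ext x
          simp only [Finset.mem_sdiff]
          have h1 : x ∈ X₀ → x ∉ A := by
            intro hx
            have := hsh.subset hx
            exact (hbx x (Finset.mem_inter.mp this).2).2
          have h2 : x ∈ A \ B → x ∈ A := fun h => (Finset.mem_sdiff.mp h).1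
          tauto
        have hX₀W : X₀ ⊂ W := lt_of_lt_of_le hsh Finset.inter_subset_left
        obtain ⟨X', hX'W, hX'b, hX'sat⟩ := (aux_mem_SEB.mp hX₀mem).2.2.2 hX₀W
        have hX'C : ∀ x, x ∈ X' → x ∉ C := by
          intro x hx hxC
          have := hX'W hx
          rw [hWx x] at this
          exact this.2 hxC
        have hX'satZ : sat X' (reduct (projAway P C) Z) := by
          refine aux_S4 (I := W) (fun x hx => ?_) hX'sat
          rw [hWx x]
          tauto
        have hX'diff : X' \ C = X' := by
          ext x
          simp only [Finset.mem_sdiff]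
          have := hX'C x
          tauto
        have hJsat : sat (X' ∪ C) (reduct P Z) := by
          rw [aux_S3 (fun x hx => hZCx x hx), hX'diff]
          exact hX'satZ
        have hJb : (X' ∪ C) ∩ b = X := by
          rw [← hX₀X, ← hX'b]
          ext x
          simp only [Finset.mem_inter, Finset.mem_union]
          have h1 : x ∈ C → x ∉ b := by
            intro hc hb'
            exact (hbx x hb').2 (Finset.mem_inter.mp hc).1
          tauto
        have hJss : X' ∪ C ⊂ Z := by
          have hsub : X' ∪ C ⊆ Z := by
            intro x hx
            rcases Finset.mem_union.mp hx with h | h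
            · exact ((hWx x).mp (hX'W h)).1
            · exact hZCx x h
          refine lt_of_le_of_ne hsub ?_
          intro h
          rw [h, hZb] at hJb
          exact hX.ne hJb.symm
        refine hminZ (X' ∪ C) hJss (aux_sat_reduct_union.mpr ⟨hJsat,
          aux_sat_reduct_union.mpr ⟨aux_sat_reduct_union.mpr
            ⟨aux_sat_reduct_factsP.mpr ?_, aux_sat_reduct_pairsP.mpr ?_⟩,
            aux_sat_reduct_factsP.mpr Finset.subset_union_right⟩⟩)
        · intro x hx
          have hx' : x ∈ X' ∩ b := by rw [hX'b, hX₀X]; exact hx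
          exact Finset.mem_union_left _ (Finset.mem_inter.mp hx').1
        · intro p hp q hq hqJ
          exfalso
          have hq1 : q ∈ (X' ∪ C) ∩ b :=
            Finset.mem_inter.mpr ⟨hqJ, (Finset.mem_inter.mp (Finset.mem_sdiff.mp hq).1).2⟩
          rw [hJb] at hq1
          exact (Finset.mem_sdiff.mp hq).2 hq1
  · rintro ⟨A', hA'a, hW, hno⟩
    have hA'x : ∀ x, x ∈ A' → x ∈ A ∧ x ∉ B := by
      intro x hx
      have := hA'a hx
      simpa [Finset.mem_sdiff] using this
    set W : Finset Atom := Y ∪ A' with hWdef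
    set Z : Finset Atom := (Y ∪ A') ∪ C with hZdef
    have hWC : ∀ x, x ∈ W → x ∉ C := by
      intro x hx hxC
      rcases Finset.mem_inter.mp hxC with ⟨hxA, hxB⟩
      rcases Finset.mem_union.mp hx with h | h
      · exact hYx x h hxA
      · exact (hA'x x h).2 hxB
    have hZW : ∀ x, x ∉ C → (x ∈ W ↔ x ∈ Z) := by
      intro x hx
      simp only [hZdef, hWdef, Finset.mem_union]
      tauto
    have hCZ : C ⊆ Z := Finset.subset_union_right
    have hWbY : W ∩ b = Y ∩ b := by
      ext x
      simp only [Finset.mem_inter, hWdef, Finset.mem_union, hbdef, Finset.mem_sdiff]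
      have := hA'x x
      tauto
    obtain ⟨hsatW, hiiW⟩ := aux_SEB_diag.mp hW
    have hsatZP' : sat Z (projAway P C) := aux_S1 (fun x hx => hZW x hx) hsatW
    have hsatZP : sat Z P := (aux_S2 hCZ).mpr hsatZP'
    have hYZ : Y ⊆ Z := (Finset.subset_union_left).trans Finset.subset_union_left
    refine ⟨Z, ⟨?_, ?_⟩, ?_⟩
    · refine aux_sat_reduct_union.mpr ⟨(aux_sat_reduct_self _ _).mpr hsatZP,
        aux_sat_reduct_union.mpr ⟨aux_sat_reduct_union.mpr
          ⟨aux_sat_reduct_factsP.mpr ?_, aux_sat_reduct_pairsP.mpr ?_⟩,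
          aux_sat_reduct_factsP.mpr hCZ⟩⟩
      · exact fun x hx => hYZ (hXx x hx).1
      · intro p hp q hq hqZ
        exact hYZ (Finset.mem_inter.mp (Finset.mem_sdiff.mp hp).1).1
    · intro J hJss hsatJ
      rw [aux_sat_reduct_union, aux_sat_reduct_union, aux_sat_reduct_union,
        aux_sat_reduct_factsP, aux_sat_reduct_pairsP, aux_sat_reduct_factsP] at hsatJ
      obtain ⟨hJP, ⟨hfX, hprs⟩, hJC⟩ := hsatJ
      set J' : Finset Atom := J \ C with hJ'def
      have hJ'eq : J' ∪ C = J := by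
        ext x
        simp only [hJ'def, Finset.mem_union, Finset.mem_sdiff]
        have : x ∈ C → x ∈ J := fun h => hJC h
        tauto
      have hJ'C : J' \ C = J' := by
        ext x
        simp only [hJ'def, Finset.mem_sdiff]
        tauto
      have hJ'sat : sat J' (reduct (projAway P C) Z) := by
        rw [← hJ'C, ← aux_S3 hCZ, hJ'eq]
        exact hJP
      have hJ'satW : sat J' (reduct (projAway P C) W) :=
        aux_S4 (fun x hx => (hZW x hx).symm) hJ'sat
      have hJ'ss : J' ⊂ W := by
        have hsub : J' ⊆ W := by
          intro x hx
          rcases Finset.mem_sdiff.mp hx with ⟨hx1, hx2⟩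
          exact (hZW x hx2).mpr (hJss.subset hx1)
        refine lt_of_le_of_ne hsub ?_
        intro h
        refine hJss.ne ?_
        rw [← hJ'eq, h]
      have hZb : Z ∩ b = Y ∩ b := by
        ext x
        simp only [Finset.mem_inter, hZdef, Finset.mem_union]
        have h1 := hYx x
        have h2 := hA'x x
        have h3 := hbx x
        have h4 : x ∈ C → x ∈ A := fun h => (Finset.mem_inter.mp h).1
        tauto
      by_cases hD : ∃ q ∈ D, q ∈ J
      · obtain ⟨q, hq, hqJ⟩ := hD
        have hDJ : ∀ p ∈ D, p ∈ J := fun p hp => hprs p hp q hq hqJ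
        have hJ'b : J' ∩ b = W ∩ b := by
          rw [hWbY]
          apply Finset.Subset.antisymm
          · intro x hx
            rcases Finset.mem_inter.mp hx with ⟨hx1, hx2⟩
            rw [← hZb]
            exact Finset.mem_inter.mpr ⟨hJss.subset (Finset.mem_sdiff.mp hx1).1, hx2⟩
          · intro x hx
            have hxC : x ∉ C := fun hc =>
              (hbx x (Finset.mem_inter.mp hx).2).2 (Finset.mem_inter.mp hc).1
            by_cases hxX : x ∈ X
            · exact Finset.mem_inter.mpr ⟨Finset.mem_sdiff.mpr ⟨hfX hxX, hxC⟩,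
                (Finset.mem_inter.mp hx).2⟩
            · have : x ∈ D := Finset.mem_sdiff.mpr ⟨hx, hxX⟩
              exact Finset.mem_inter.mpr ⟨Finset.mem_sdiff.mpr ⟨hDJ x this, hxC⟩,
                (Finset.mem_inter.mp hx).2⟩
        exact hiiW J' hJ'ss hJ'b hJ'satW
      · push_neg at hD
        have hJ'bX : J' ∩ b = X := by
          apply Finset.Subset.antisymm
          · intro x hx
            rcases Finset.mem_inter.mp hx with ⟨hx1, hx2⟩
            have hxYb : x ∈ Y ∩ b := by
              rw [← hZb]
              exact Finset.mem_inter.mpr ⟨hJss.subset (Finset.mem_sdiff.mp hx1).1, hx2⟩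
            by_contra hxX
            exact hD x (Finset.mem_sdiff.mpr ⟨hxYb, hxX⟩) (Finset.mem_sdiff.mp hx1).1
          · intro x hx
            have hxC : x ∉ C := fun hc =>
              (hbx x (hXx x hx).2).2 (Finset.mem_inter.mp hc).1
            exact Finset.mem_inter.mpr ⟨Finset.mem_sdiff.mpr ⟨hfX hx, hxC⟩, (hXx x hx).2⟩
        have hXWb : X ⊂ W ∩ b := by
          rw [hWbY]
          exact hX
        exact absurd ⟨X, aux_mem_SEB.mpr ⟨Or.inr hXWb, hsatW, hiiW,
          fun _ => ⟨J', hJ'ss.subset, hJ'bX, hJ'satW⟩⟩, hXa⟩ hno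
    · ext x
      simp only [Finset.mem_sdiff, hZdef, Finset.mem_union, hCdef, Finset.mem_inter]
      have h1 := hYx x
      have h2 := hA'x x
      tauto

end Aux6
section Aux7
set_option linter.unusedSectionVars false

variable {Atom : Type} [DecidableEq Atom] [Fintype Atom]

lemma aux_RInter_iff {P' : ASPProgram Atom} {a b Y X : Finset Atom} :
    X ∈ RInter P' a b Y ↔
      (∃ A' ⊆ a, (Y ∪ A', Y ∪ A') ∈ SEB b P') ∧
      (∀ A' ⊆ a, (Y ∪ A', Y ∪ A') ∈ SEB b P' →
        ∃ X₀, (X₀, Y ∪ A') ∈ SEB b P' ∧ X₀ \ a = X) := by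
  unfold RInter RFam
  simp only [Set.mem_setOf_eq, Set.Nonempty]
  constructor
  · rintro ⟨⟨S, A', hA', hdg, rfl⟩, hall⟩
    refine ⟨⟨A', hA', hdg⟩, ?_⟩
    intro A'' hA'' hdg''
    have := hall _ ⟨A'', hA'', hdg'', rfl⟩
    obtain ⟨X₀, h1, h2⟩ := this
    exact ⟨X₀, h1, h2.symm⟩
  · rintro ⟨⟨A', hA', hdg⟩, hall⟩
    constructor
    · exact ⟨_, A', hA', hdg, rfl⟩
    · rintro S ⟨A'', hA'', hdg'', rfl⟩
      obtain ⟨X₀, h1, h2⟩ := hall A'' hA'' hdg''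
      exact ⟨X₀, h1, h2.symm⟩

lemma aux_RInter_diag {P' : ASPProgram Atom} {a b Y : Finset Atom}
    (hYa : ∀ x ∈ Y, x ∉ a) :
    Y ∈ RInter P' a b Y ↔ ∃ A' ⊆ a, (Y ∪ A', Y ∪ A') ∈ SEB b P' := by
  rw [aux_RInter_iff]
  constructor
  · exact fun h => h.1
  · intro h
    refine ⟨h, ?_⟩
    intro A' hA' hdg
    refine ⟨Y ∪ A', hdg, ?_⟩
    ext x
    simp only [Finset.mem_sdiff, Finset.mem_union]
    have h1 := hYa x
    have h2 : x ∈ A' → x ∈ a := fun hx => hA' hx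
    tauto

end Aux7

/-- if `P` is `B`-relativized `A`-simplifiable and the relativized
SE-models of `Q` match `⋂𝓡^Y_{⟨P′, A∖B, B∖A⟩}` for `P′ = P_{|𝒰∖(A∩B)}`, then `Q` is
a `B`-relativized `A`-simplification of `P`. -/
theorem stmt17 {Atom : Type} [DecidableEq Atom] [Fintype Atom]
    (P Q : ASPProgram Atom) (A B : Finset Atom)
    (hs : ∃ Q₀ : ASPProgram Atom, progOver Q₀ Aᶜ ∧ SimpEq P A B Q₀)
    (hQ : progOver Q Aᶜ)
    (hSE : SERel Q Aᶜ (B \ A) =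
      {p : Finset Atom × Finset Atom | p.2 ⊆ Aᶜ ∧
        p.1 ∈ RInter (projAway P (A ∩ B)) (A \ B) (B \ A) p.2}) :
    SimpEq P A B Q := by
  classical
  obtain ⟨Q₀, hQ₀, hS0⟩ := hs
  -- a membership form of hSE
  have hQmemiff : ∀ X Y : Finset Atom, Y ⊆ Aᶜ →
      ((X, Y) ∈ SEB (B \ A) Q ↔
        X ∈ RInter (projAway P (A ∩ B)) (A \ B) (B \ A) Y) := by
    intro X Y hY
    have h := Set.ext_iff.mp hSE (X, Y)
    simp only [SERel, Set.mem_setOf_eq] at h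
    constructor
    · intro hm
      exact (h.mp ⟨hm, hY⟩).2
    · intro hm
      exact (h.mpr ⟨hY, hm⟩).1
  -- probing `Q₀` by `A`-separated programs with trivial projection
  have hprobe : ∀ R₁ R₂ : ASPProgram Atom, progOver R₁ (B \ A) → progOver R₂ (A ∩ B) →
      projAway (R₁ ∪ R₂) A = R₁ →
      (fun I => I \ A) '' AS (P ∪ (R₁ ∪ R₂)) = AS (Q₀ ∪ R₁) := by
    intro R₁ R₂ h1 h2 h3
    have hover : progOver (R₁ ∪ R₂) B :=
      aux_progOver_union (aux_progOver_mono h1 Finset.sdiff_subset)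
        (aux_progOver_mono h2 Finset.inter_subset_right)
    have hsep : ASeparated (R₁ ∪ R₂) A :=
      ⟨R₁, R₂, rfl, aux_progOver_mono h1 aux_sdiff_subset_compl,
        aux_progOver_mono h2 Finset.inter_subset_left⟩
    have := hS0 _ hover hsep
    rwa [h3] at this
  have hCA : ((A ∩ B) \ A : Finset Atom) = ∅ := by
    ext x
    simp only [Finset.mem_sdiff, Finset.mem_inter, Finset.notMem_empty]
    tauto
  have hfactsC : factsP (((A ∩ B) \ A : Finset Atom)) = (∅ : ASPProgram Atom) := by
    rw [hCA]
    simp [factsP]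
  -- diagonal characterisation for Q₀
  have hdiagQ₀ : ∀ Y : Finset Atom, Y ⊆ Aᶜ →
      ((Y, Y) ∈ SEB (B \ A) Q₀ ↔
        ∃ A' ⊆ A \ B, (Y ∪ A', Y ∪ A') ∈ SEB (B \ A) (projAway P (A ∩ B))) := by
    intro Y hY
    have hproj : projAway (factsP (Y ∩ (B \ A)) ∪ factsP (A ∩ B)) A
        = factsP (Y ∩ (B \ A)) := by
      rw [aux_projAway_union, aux_projAway_factsP, aux_projAway_factsP, hfactsC]
      have e1 : (Y ∩ (B \ A)) \ A = Y ∩ (B \ A) := by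
        ext x
        simp only [Finset.mem_sdiff, Finset.mem_inter]
        tauto
      rw [e1, Finset.union_empty]
    have him := hprobe (factsP (Y ∩ (B \ A))) (factsP (A ∩ B))
      (aux_progOver_factsP Finset.inter_subset_right)
      (aux_progOver_factsP (Finset.Subset.refl _)) hproj
    calc (Y, Y) ∈ SEB (B \ A) Q₀
        ↔ Y ∈ AS (Q₀ ∪ factsP (Y ∩ (B \ A))) := aux_probeD.symm
      _ ↔ Y ∈ (fun I => I \ A) '' AS (P ∪ (factsP (Y ∩ (B \ A)) ∪ factsP (A ∩ B))) := by
          rw [him]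
      _ ↔ ∃ Z ∈ AS (P ∪ (factsP (Y ∩ (B \ A)) ∪ factsP (A ∩ B))), Z \ A = Y := by
          simp only [Set.mem_image]
      _ ↔ _ := aux_lemE hY
  -- diagonal characterisation for Q
  have hdiagQ : ∀ Y : Finset Atom, Y ⊆ Aᶜ →
      ((Y, Y) ∈ SEB (B \ A) Q ↔
        ∃ A' ⊆ A \ B, (Y ∪ A', Y ∪ A') ∈ SEB (B \ A) (projAway P (A ∩ B))) := by
    intro Y hY
    rw [hQmemiff Y Y hY]
    exact aux_RInter_diag (fun x hx hxa => by
      have := hY hx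
      simp only [Finset.mem_compl] at this
      exact this (Finset.mem_sdiff.mp hxa).1)
  -- non-diagonal characterisation for Q₀
  have hndQ₀ : ∀ X Y : Finset Atom, Y ⊆ Aᶜ → X ⊂ Y ∩ (B \ A) →
      ((X, Y) ∈ SEB (B \ A) Q₀ ↔
        (∃ A' ⊆ A \ B, (Y ∪ A', Y ∪ A') ∈ SEB (B \ A) (projAway P (A ∩ B))) ∧
        (∀ A' ⊆ A \ B, (Y ∪ A', Y ∪ A') ∈ SEB (B \ A) (projAway P (A ∩ B)) →
          ∃ X₀, (X₀, Y ∪ A') ∈ SEB (B \ A) (projAway P (A ∩ B)) ∧ X₀ \ (A \ B) = X)) := by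
    intro X Y hY hX
    have hXsub : X ⊆ B \ A := hX.subset.trans Finset.inter_subset_right
    have hDsub : (Y ∩ (B \ A)) \ X ⊆ B \ A :=
      (Finset.sdiff_subset).trans Finset.inter_subset_right
    have hproj : projAway ((factsP X ∪ pairsP ((Y ∩ (B \ A)) \ X)) ∪ factsP (A ∩ B)) A
        = factsP X ∪ pairsP ((Y ∩ (B \ A)) \ X) := by
      rw [aux_projAway_union, aux_projAway_union, aux_projAway_factsP,
        aux_projAway_factsP, hfactsC,
        aux_projAway_pairsP (fun x hx => (Finset.mem_sdiff.mp (hDsub hx)).2)]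
      have e1 : X \ A = X := by
        ext x
        simp only [Finset.mem_sdiff]
        have h1 : x ∈ X → x ∉ A := fun h => (Finset.mem_sdiff.mp (hXsub h)).2
        tauto
      rw [e1, Finset.union_empty]
    have him := hprobe (factsP X ∪ pairsP ((Y ∩ (B \ A)) \ X)) (factsP (A ∩ B))
      (aux_progOver_union (aux_progOver_factsP hXsub) (aux_progOver_pairsP hDsub))
      (aux_progOver_factsP (Finset.Subset.refl _)) hproj
    have hASiff : Y ∈ AS (Q₀ ∪ (factsP X ∪ pairsP ((Y ∩ (B \ A)) \ X))) ↔
        ∃ A' ⊆ A \ B, (Y ∪ A', Y ∪ A') ∈ SEB (B \ A) (projAway P (A ∩ B)) ∧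
          ¬ ∃ X₀, (X₀, Y ∪ A') ∈ SEB (B \ A) (projAway P (A ∩ B)) ∧
            X₀ \ (A \ B) = X := by
      calc Y ∈ AS (Q₀ ∪ (factsP X ∪ pairsP ((Y ∩ (B \ A)) \ X)))
          ↔ Y ∈ (fun I => I \ A) ''
            AS (P ∪ ((factsP X ∪ pairsP ((Y ∩ (B \ A)) \ X)) ∪ factsP (A ∩ B))) := by
            rw [him]
        _ ↔ ∃ Z ∈ AS (P ∪ ((factsP X ∪ pairsP ((Y ∩ (B \ A)) \ X)) ∪ factsP (A ∩ B))),
              Z \ A = Y := by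
            simp only [Set.mem_image]
        _ ↔ _ := aux_lemF hY hX
    constructor
    · intro h
      have hdg : (Y, Y) ∈ SEB (B \ A) Q₀ := aux_SEB_fst h
      have hnotAS : Y ∉ AS (Q₀ ∪ (factsP X ∪ pairsP ((Y ∩ (B \ A)) \ X))) :=
        fun hc => ((aux_probeG hX).mp hc).2 h
      refine ⟨(hdiagQ₀ Y hY).mp hdg, ?_⟩
      intro A' hA' hdg'
      by_contra hno
      exact hnotAS (hASiff.mpr ⟨A', hA', hdg', hno⟩)
    · rintro ⟨hdg, hall⟩
      have hdgQ₀ : (Y, Y) ∈ SEB (B \ A) Q₀ := (hdiagQ₀ Y hY).mpr hdg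
      by_contra hnmem
      have hmem : Y ∈ AS (Q₀ ∪ (factsP X ∪ pairsP ((Y ∩ (B \ A)) \ X))) :=
        (aux_probeG hX).mpr ⟨hdgQ₀, hnmem⟩
      obtain ⟨A', hA', hdg', hno⟩ := hASiff.mp hmem
      exact hno (hall A' hA' hdg')
  -- non-diagonal characterisation for Q
  have hndQ : ∀ X Y : Finset Atom, Y ⊆ Aᶜ → X ⊂ Y ∩ (B \ A) →
      ((X, Y) ∈ SEB (B \ A) Q ↔
        (∃ A' ⊆ A \ B, (Y ∪ A', Y ∪ A') ∈ SEB (B \ A) (projAway P (A ∩ B))) ∧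
        (∀ A' ⊆ A \ B, (Y ∪ A', Y ∪ A') ∈ SEB (B \ A) (projAway P (A ∩ B)) →
          ∃ X₀, (X₀, Y ∪ A') ∈ SEB (B \ A) (projAway P (A ∩ B)) ∧ X₀ \ (A \ B) = X)) := by
    intro X Y hY _
    rw [hQmemiff X Y hY]
    exact aux_RInter_iff
  -- the key equality of relativized SE-models
  have hkey : SERel Q₀ Aᶜ (B \ A) = SERel Q Aᶜ (B \ A) := by
    ext p
    obtain ⟨X, Y⟩ := p
    simp only [SERel, Set.mem_setOf_eq]
    constructor
    · rintro ⟨hmem, hY⟩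
      refine ⟨?_, hY⟩
      rcases (aux_mem_SEB.mp hmem).1 with h | h
      · subst h
        exact (hdiagQ X hY).mpr ((hdiagQ₀ X hY).mp hmem)
      · exact (hndQ X Y hY h).mpr ((hndQ₀ X Y hY h).mp hmem)
    · rintro ⟨hmem, hY⟩
      refine ⟨?_, hY⟩
      rcases (aux_mem_SEB.mp hmem).1 with h | h
      · subst h
        exact (hdiagQ₀ X hY).mpr ((hdiagQ X hY).mp hmem)
      · exact (hndQ₀ X Y hY h).mpr ((hndQ X Y hY h).mp hmem)
  -- conclude
  intro R hRB hRsep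
  rw [hS0 R hRB hRsep]
  have h1 : progOver (projAway R A) (B \ A) := aux_progOver_projAway hRB
  exact Set.Subset.antisymm (aux_transfer hQ₀ hQ hkey h1)
    (aux_transfer hQ hQ₀ hkey.symm h1)
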